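/- Given a simple graph G on n vertices labeled 1,…,n and a set Λ = {λ₁, λ₂, …, λₙ} of n distinct real numbers, there exists an n×n real symmetric matrix A whose graph is G, whose multiset of eigenvalues is exactly Λ, and which moreover has the Weak Spectral Property. -/

import Mathlib

/-!
Perturb `diagonal λ` along the graph: `A t = diagonal (d t) + t • adjMatrix G`. The map
`(t, d) ↦ (eval λₖ (charpoly (diagonal d + t • adjMatrix G)))ₖ` vanishes at `(0, λ)`, and its
partial derivative in `d` there is the invertible diagonal map `v ↦ (-∏_{j ≠ k} (λₖ - λⱼ) vₖ)ₖ`.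
The implicit function theorem gives `d t → λ` such that `A t` has spectrum `Λ`; for `t ≠ 0` the
graph of `A t` is `G`.

Since the spectrum of `A` is simple, a matrix `X` commuting with `A` is a polynomial `q(A)`,
hence `X = ∑ᵢ q(λᵢ) Pᵢ` with `Pᵢ` the spectral projections. So the diagonal of `X` is `W c`,
where `W k i = (Pᵢ) k k` and `c i = q(λᵢ)`, and `X = 0` as soon as `W` is invertible.
At `t = 0` the `Pᵢ` are the coordinate projections and `W = 1`; by continuity `W` stays
invertible for small `t`.
-/

/-- A real symmetric matrix `A` has the Weak Spectral Property (WSP) if the only real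
symmetric matrix `X` with zero diagonal that commutes with `A` is `X = 0`. -/
def HasWSP {ι : Type*} [Fintype ι] [DecidableEq ι] (A : Matrix ι ι ℝ) : Prop :=
  ∀ X : Matrix ι ι ℝ, X.IsSymm → (∀ i, X i i = 0) → X * A = A * X → X = 0

open Polynomial Matrix Filter Topology

section Algebra

variable {ι : Type*} [Fintype ι] [DecidableEq ι]

theorem Matrix.aeval_diagonal {R : Type*} [CommRing R] (d : ι → R) (p : R[X]) :
    aeval (diagonal d) p = diagonal fun i => p.eval (d i) := by
  rw [← diagonalAlgHom_apply (R := R), aeval_algHom_apply, aeval_pi_apply, diagonalAlgHom_apply]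
  simp only [coe_aeval_eq_eval]

theorem Matrix.eq_diagonal_diag_of_commute {R : Type*} [CommRing R] [NoZeroDivisors R]
    {d : ι → R} (hd : Function.Injective d) {Y : Matrix ι ι R} (h : Commute Y (diagonal d)) :
    Y = diagonal Y.diag := by
  ext i j
  rcases eq_or_ne i j with rfl | hij
  · simp
  · have hij' : Y i j * (d j - d i) = 0 := by
      have := congr_fun₂ h.eq i j
      rw [mul_diagonal, diagonal_mul] at this
      rw [mul_sub, this, mul_comm, sub_self]
    rw [diagonal_apply_ne _ hij]
    exact (mul_eq_zero.mp hij').resolve_right (sub_ne_zero.mpr (hd.ne hij.symm))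

section Field

variable {K : Type*} [Field K] {l : ι → K}

theorem Matrix.charpoly_eq_prod_X_sub_C_of_eval_eq_zero (hl : Function.Injective l)
    {A : Matrix ι ι K} (h : ∀ i, A.charpoly.eval (l i) = 0) :
    A.charpoly = ∏ i, (X - C (l i)) := by
  rw [← Lagrange.nodal_eq]
  refine eq_of_degree_sub_lt_of_eval_index_eq Finset.univ hl.injOn ?_ fun i _ => ?_
  · have hdeg : A.charpoly.degree = (Lagrange.nodal Finset.univ l).degree := by
      rw [charpoly_degree_eq_dim, Lagrange.degree_nodal, Finset.card_univ]
    calc (A.charpoly - Lagrange.nodal Finset.univ l).degree < A.charpoly.degree :=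
          degree_sub_lt_left hdeg (charpoly_monic A).ne_zero
            (by rw [(charpoly_monic A).leadingCoeff, Lagrange.nodal_monic.leadingCoeff])
      _ = Finset.univ.card := by rw [charpoly_degree_eq_dim, Finset.card_univ]
  · rw [h, Lagrange.eval_nodal_at_node (Finset.mem_univ i)]

/-- Reduce `q` modulo the characteristic polynomial (Cayley–Hamilton), then interpolate the
remainder, which has degree `< card ι`, at the nodes `l`. -/
theorem Matrix.aeval_eq_sum_eval_smul_aeval_basis (hl : Function.Injective l)
    {A : Matrix ι ι K} (hA : A.charpoly = ∏ i, (X - C (l i))) (q : K[X]) :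
    aeval A q = ∑ i, q.eval (l i) • aeval A (Lagrange.basis Finset.univ l i) := by
  have hroot : ∀ i, aeval (l i) A.charpoly = 0 := fun i => by
    simp [hA, Finset.prod_eq_zero (Finset.mem_univ i)]
  have hr := Lagrange.eq_interpolate (s := Finset.univ) hl.injOn
    ((degree_modByMonic_lt q (charpoly_monic A)).trans_eq
      (by rw [charpoly_degree_eq_dim, Finset.card_univ]))
  rw [← aeval_modByMonic_eq_self_of_root (aeval_self_charpoly A), hr, Lagrange.interpolate_apply,
    map_sum]
  refine Finset.sum_congr rfl fun i _ => ?_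
  rw [map_mul, aeval_C, ← Algebra.smul_def, ← coe_aeval_eq_eval,
    aeval_modByMonic_eq_self_of_root (hroot i), coe_aeval_eq_eval]

end Field

section Hermitian

variable {𝕜 : Type*} [RCLike 𝕜] {A : Matrix ι ι 𝕜}

theorem Matrix.IsHermitian.injective_eigenvalues_of_charpoly_eq (hA : A.IsHermitian)
    {l : ι → 𝕜} (hl : Function.Injective l) (h : A.charpoly = ∏ i, (X - C (l i))) :
    Function.Injective hA.eigenvalues := by
  have hroots : A.charpoly.roots = Finset.univ.val.map l := by
    rw [h, roots_prod _ _ (by simp [Finset.prod_ne_zero_iff, X_sub_C_ne_zero])]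
    simp
  have hnodup : (Finset.univ.val.map ((RCLike.ofReal : ℝ → 𝕜) ∘ hA.eigenvalues)).Nodup := by
    rw [← hA.roots_charpoly_eq_eigenvalues, hroots]
    exact Fintype.nodup_map_univ_iff_injective.mpr hl
  exact (Fintype.nodup_map_univ_iff_injective.mp hnodup).of_comp

/-- In an eigenbasis of `A`, a matrix commuting with `A` is diagonal; interpolating its diagonal
at the (distinct) eigenvalues gives the polynomial. -/
theorem Matrix.IsHermitian.exists_aeval_eq_of_commute {X : Matrix ι ι 𝕜} (hA : A.IsHermitian)
    (hμ : Function.Injective hA.eigenvalues) (hX : Commute X A) :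
    ∃ q : 𝕜[X], aeval A q = X := by
  set φ := Unitary.conjStarAlgAut 𝕜 (Matrix ι ι 𝕜) hA.eigenvectorUnitary
  set μ : ι → 𝕜 := RCLike.ofReal ∘ hA.eigenvalues
  have hY : Commute (φ.symm X) (diagonal μ) := by
    simpa only [φ.symm_apply_eq.mpr hA.spectral_theorem] using hX.map φ.symm
  have hμ' : Function.Injective μ := RCLike.ofReal_injective.comp hμ
  refine ⟨Lagrange.interpolate Finset.univ μ (φ.symm X).diag, ?_⟩
  rw [hA.spectral_theorem, aeval_algHom_apply, aeval_diagonal]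
  change φ (diagonal fun i => eval (μ i) _) = X
  simp_rw [Lagrange.eval_interpolate_at_node _ hμ'.injOn (Finset.mem_univ _)]
  rw [← eq_diagonal_diag_of_commute hμ' hY, StarAlgEquiv.apply_symm_apply]

end Hermitian

end Algebra

section SpectralProjections

variable {ι : Type*} [Fintype ι] [DecidableEq ι] {K : Type*} [Field K]

/-- Column `i` is the diagonal of `pᵢ(A)`, where `pᵢ` is the Lagrange basis polynomial at the
node `l i`. When the spectrum of `A` is exactly `l` (all simple), `pᵢ(A)` is the spectral
projection onto the `l i`-eigenspace. -/
noncomputable def lagrangeProjDiag (l : ι → K) (A : Matrix ι ι K) : Matrix ι ι K :=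
  of fun k i => aeval A (Lagrange.basis Finset.univ l i) k k

theorem hasWSP_of_isUnit_lagrangeProjDiag {l : ι → ℝ} (hl : Function.Injective l)
    {A : Matrix ι ι ℝ} (hA : A.IsSymm) (hchar : A.charpoly = ∏ i, (X - C (l i)))
    (hW : IsUnit (lagrangeProjDiag l A)) : HasWSP A := by
  have hH : A.IsHermitian := isHermitian_iff_isSymm.mpr hA
  intro X' _ hdiag hcomm
  obtain ⟨q, rfl⟩ :=
    hH.exists_aeval_eq_of_commute (hH.injective_eigenvalues_of_charpoly_eq hl hchar) hcomm
  have hq : (fun i => q.eval (l i)) = 0 := by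
    refine mulVec_injective_iff_isUnit.mpr hW ?_
    ext k
    rw [mulVec_zero, Pi.zero_apply, ← hdiag k, aeval_eq_sum_eval_smul_aeval_basis hl hchar]
    simp [mulVec, dotProduct, lagrangeProjDiag, Matrix.sum_apply, mul_comm]
  rw [aeval_eq_sum_eval_smul_aeval_basis hl hchar]
  simp [funext_iff.mp hq]

theorem lagrangeProjDiag_diagonal {l : ι → K} (hl : Function.Injective l) :
    lagrangeProjDiag l (diagonal l) = 1 := by
  ext k i
  rw [lagrangeProjDiag, of_apply, aeval_diagonal, diagonal_apply_eq, one_apply]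
  split_ifs with h
  · rw [h, Lagrange.eval_basis_self hl.injOn (Finset.mem_univ i)]
  · exact Lagrange.eval_basis_of_ne (Ne.symm h) (Finset.mem_univ k)

variable [TopologicalSpace K] [IsTopologicalRing K]

theorem continuous_lagrangeProjDiag (l : ι → K) : Continuous (lagrangeProjDiag l) :=
  continuous_matrix fun k _ => (Polynomial.continuous_aeval _).matrix_elem k k

theorem eventually_isUnit_lagrangeProjDiag [T1Space K] {l : ι → K} (hl : Function.Injective l)
    {α : Type*} {f : Filter α} {A : α → Matrix ι ι K} (hA : Tendsto A f (𝓝 (diagonal l))) :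
    ∀ᶠ a in f, IsUnit (lagrangeProjDiag l (A a)) := by
  have hdet : Tendsto (fun a => (lagrangeProjDiag l (A a)).det) f (𝓝 1) := by
    simpa [Function.comp_def, lagrangeProjDiag_diagonal hl] using
      ((continuous_lagrangeProjDiag l).matrix_det.tendsto _).comp hA
  filter_upwards [hdet.eventually_ne one_ne_zero] with a ha
  exact (isUnit_iff_isUnit_det _).mpr (isUnit_iff_ne_zero.mpr ha)

end SpectralProjections

section ImplicitFunction

variable {𝕜 : Type*} [NontriviallyNormedField 𝕜]

theorem ContinuousLinearMap.isInvertible_pi_smul_proj {ι : Type*} {c : ι → 𝕜}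
    (hc : ∀ k, c k ≠ 0) :
    (ContinuousLinearMap.pi fun k =>
      c k • ContinuousLinearMap.proj (R := 𝕜) (φ := fun _ : ι => 𝕜) k).IsInvertible :=
  .of_inverse (g := .pi fun k => (c k)⁻¹ • .proj k) (by ext; simp [hc]) (by ext; simp [hc])

variable {ι : Type*} [Fintype ι] [DecidableEq ι]

theorem ContDiff.matrix_det {E : Type*} [NormedAddCommGroup E] [NormedSpace 𝕜 E]
    {n : WithTop ℕ∞} {M : E → Matrix ι ι 𝕜} (hM : ∀ i j, ContDiff 𝕜 n fun x => M x i j) :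
    ContDiff 𝕜 n fun x => (M x).det := by
  simp only [det_apply]
  exact ContDiff.sum fun σ _ => (contDiff_prod fun i _ => hM _ _).const_smul _

theorem contDiff_eval_charpoly_diagonal_add_smul {n : WithTop ℕ∞} (S : Matrix ι ι 𝕜) (x : 𝕜) :
    ContDiff 𝕜 n fun p : 𝕜 × (ι → 𝕜) => (diagonal p.2 + p.1 • S).charpoly.eval x := by
  simp only [eval_charpoly]
  refine ContDiff.matrix_det fun i j => ?_
  rcases eq_or_ne i j with rfl | hij
  · simp only [Matrix.sub_apply, Matrix.add_apply, Matrix.smul_apply, scalar_apply,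
      diagonal_apply_eq, smul_eq_mul]
    fun_prop
  · simp only [Matrix.sub_apply, Matrix.add_apply, Matrix.smul_apply, scalar_apply,
      diagonal_apply_ne _ hij, smul_eq_mul]
    fun_prop

theorem hasFDerivAt_prod_sub (l : ι → 𝕜) :
    HasFDerivAt (fun (d : ι → 𝕜) k => ∏ j, (l k - d j))
      (ContinuousLinearMap.pi fun k => -(∏ j ∈ Finset.univ.erase k, (l k - l j)) •
        ContinuousLinearMap.proj (R := 𝕜) (φ := fun _ : ι => 𝕜) k) l := by
  refine hasFDerivAt_pi.mpr fun k => ?_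
  have := HasFDerivAt.finsetProd (u := Finset.univ) (g := fun j (d : ι → 𝕜) => l k - d j)
    fun j _ => (hasFDerivAt_apply (𝕜 := 𝕜) j l).const_sub (l k)
  refine this.congr_fderiv ?_
  rw [Finset.sum_eq_single k]
  · ext; simp
  · intro j _ hjk
    rw [Finset.prod_eq_zero (Finset.mem_erase.mpr ⟨Ne.symm hjk, Finset.mem_univ k⟩) (sub_self _)]
    simp
  · simp

theorem exists_tendsto_charpoly_diagonal_add_smul_eq (S : Matrix ι ι ℝ) {l : ι → ℝ}
    (hl : Function.Injective l) :
    ∃ ψ : ℝ → ι → ℝ, Tendsto ψ (𝓝 0) (𝓝 l) ∧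
      ∀ᶠ t in 𝓝 0, (diagonal (ψ t) + t • S).charpoly = ∏ i, (X - C (l i)) := by
  set F : ℝ × (ι → ℝ) → ι → ℝ := fun p k => (diagonal p.2 + p.1 • S).charpoly.eval (l k)
  have hF : ContDiff ℝ 1 F :=
    contDiff_pi.mpr fun k => contDiff_eval_charpoly_diagonal_add_smul S (l k)
  have hF₀ : ∀ d, F (0, d) = fun k => ∏ j, (l k - d j) := fun d => by
    simp [F, charpoly_diagonal, eval_prod]
  have hslice := (hasFDerivAt_prod_sub l).congr_of_eventuallyEq
    (f₁ := F ∘ fun d => (0, d)) (.of_forall hF₀)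
  have hpartial := ((hF.differentiable one_ne_zero (0, l)).hasFDerivAt.comp l
    (hasFDerivAt_prodMk_right 0 l)).unique hslice
  have hinv : (fderiv ℝ F (0, l) ∘L .inr ℝ ℝ (ι → ℝ)).IsInvertible := by
    rw [hpartial]
    refine ContinuousLinearMap.isInvertible_pi_smul_proj fun k => neg_ne_zero.mpr ?_
    exact Finset.prod_ne_zero_iff.mpr fun j hj =>
      sub_ne_zero.mpr (hl.ne (Finset.ne_of_mem_erase hj).symm)
  have cdf := hF.contDiffAt (x := (0, l))
  refine ⟨cdf.implicitFunction one_ne_zero hinv, ?_, ?_⟩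
  · simpa [cdf.implicitFunction_apply_self] using
      (cdf.contDiffAt_implicitFunction one_ne_zero hinv).continuousAt.tendsto
  · filter_upwards [cdf.eventually_apply_implicitFunction one_ne_zero hinv] with t ht
    refine charpoly_eq_prod_X_sub_C_of_eval_eq_zero hl fun k => ?_
    rw [hF₀] at ht
    exact (congr_fun ht k).trans (Finset.prod_eq_zero (Finset.mem_univ k) (sub_self _))

end ImplicitFunction

/-- Given a simple graph `G` on `n` vertices and `n` distinct real numbers `λ i`, there
exists an `n × n` real symmetric matrix `A` whose graph is `G`, whose eigenvalues counted
with multiplicity are exactly the `λ i`, and which moreover has the WSP. -/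
theorem finite_lambda_siep_wsp {n : ℕ} (G : SimpleGraph (Fin n)) (l : Fin n → ℝ)
    (hl : Function.Injective l) :
    ∃ A : Matrix (Fin n) (Fin n) ℝ, A.IsSymm ∧
      (∀ i j : Fin n, i ≠ j → (A i j ≠ 0 ↔ G.Adj i j)) ∧
      A.charpoly = ∏ i : Fin n, (Polynomial.X - Polynomial.C (l i)) ∧
      HasWSP A := by
  classical
  obtain ⟨ψ, hψ, hchar⟩ := exists_tendsto_charpoly_diagonal_add_smul_eq (G.adjMatrix ℝ) hl
  set A : ℝ → Matrix (Fin n) (Fin n) ℝ := fun t => diagonal (ψ t) + t • G.adjMatrix ℝ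
  have hA : Tendsto A (𝓝 0) (𝓝 (diagonal l)) := by
    simpa using ((continuous_id.matrix_diagonal.tendsto l).comp hψ).add
      (tendsto_id.smul_const (G.adjMatrix ℝ))
  obtain ⟨t, ⟨hchar_t, hW⟩, ht : t ≠ 0⟩ :=
    (((hchar.and (eventually_isUnit_lagrangeProjDiag hl hA)).filter_mono
      (nhdsWithin_le_nhds (s := {0}ᶜ))).and self_mem_nhdsWithin).exists
  have hsymm : (A t).IsSymm := (isSymm_diagonal _).add (G.isSymm_adjMatrix.smul t)
  refine ⟨A t, hsymm, fun i j hij => ?_, hchar_t,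
    hasWSP_of_isUnit_lagrangeProjDiag hl hsymm hchar_t hW⟩
  simp [A, diagonal_apply_ne _ hij, ht, SimpleGraph.adjMatrix_apply]
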